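/- For p ≥ 3 and u ≤ -√(2(p-1)/p), setting z = (1/(p-1))·(-u - √(u² - 2(p-1)/p)), the identity Θ_{0,p}(√2·u) = (1/2)·[(2-p)/p - log(p·z²/2) + ((p-1)/2)·z² - 2/(p²z²)] holds, where Θ_{0,p}(v) = (1/2)log(p-1) - ((p-2)/(4(p-1)))v² - I₁(v) for v ≤ -E_∞, E_∞ = 2√((p-1)/p), and I₁ is the rate function I₁(v) = -(v/E_∞²)√(v²-E_∞²) - log(-v+√(v²-E_∞²)) + log E_∞. -/

import Mathlib

open Real

noncomputable def Einf (p : ℕ) : ℝ := 2 * Real.sqrt ((p - 1) / p)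

noncomputable def rateI1 (p : ℕ) (u : ℝ) : ℝ :=
  -(u / (Einf p) ^ 2) * Real.sqrt (u ^ 2 - (Einf p) ^ 2)
    - Real.log (-u + Real.sqrt (u ^ 2 - (Einf p) ^ 2)) + Real.log (Einf p)

/-- `Θ_{0,p}(v)` for `v ≤ -E_∞`. -/
noncomputable def Theta0 (p : ℕ) (v : ℝ) : ℝ :=
  (1 / 2) * Real.log (p - 1) - ((p - 2) / (4 * (p - 1))) * v ^ 2 - rateI1 p v

theorem stmt9 (p : ℕ) (hp : 3 ≤ p) (u : ℝ)
    (hu : u ≤ -Real.sqrt (2 * ((p : ℝ) - 1) / p))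
    (z : ℝ)
    (hz : z = (1 / ((p : ℝ) - 1)) * (-u - Real.sqrt (u ^ 2 - 2 * ((p : ℝ) - 1) / p))) :
    Theta0 p (Real.sqrt 2 * u) =
      (1 / 2) * ((2 - (p : ℝ)) / p - Real.log ((p : ℝ) * z ^ 2 / 2)
        + (((p : ℝ) - 1) / 2) * z ^ 2 - 2 / ((p : ℝ) ^ 2 * z ^ 2)) := by
  have hp3 : (3:ℝ) ≤ (p:ℝ) := by exact_mod_cast hp
  have hp0 : (0:ℝ) < p := by linarith
  have hpm1 : (0:ℝ) < (p:ℝ) - 1 := by linarith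
  obtain ⟨q, hqdef⟩ : ∃ q : ℝ, q = 2 * ((p:ℝ) - 1) / p := ⟨_, rfl⟩
  rw [← hqdef] at hu hz
  have hq : 0 < q := by rw [hqdef]; positivity
  obtain ⟨s, hsdef⟩ : ∃ s : ℝ, s = Real.sqrt (u ^ 2 - q) := ⟨_, rfl⟩
  rw [← hsdef] at hz
  have hsqq : Real.sqrt q ≤ -u := by linarith [hu]
  have husq : q ≤ u ^ 2 := by
    nlinarith [Real.sq_sqrt hq.le, Real.sqrt_nonneg q]
  have hs0 : 0 ≤ s := hsdef ▸ Real.sqrt_nonneg _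
  have hs2 : s ^ 2 = u ^ 2 - q := by rw [hsdef]; exact Real.sq_sqrt (by linarith)
  have hu0 : u < 0 := by
    have : 0 < Real.sqrt q := Real.sqrt_pos.mpr hq
    linarith
  have hB : 0 < -u + s := by linarith
  have hAB : (-u - s) * (-u + s) = q := by linear_combination -hs2
  have hA : 0 < -u - s := by nlinarith
  have hs2q : s ^ 2 = u ^ 2 - 2 * ((p:ℝ) - 1) / p := by rw [hs2, hqdef]
  have hs2p : (p:ℝ) * s ^ 2 = (p:ℝ) * u ^ 2 - 2 * ((p:ℝ) - 1) := by
    rw [hs2q]; field_simp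
  have hz' : z = (-u - s) / ((p:ℝ) - 1) := by rw [hz]; ring
  have hz0 : 0 < z := by rw [hz']; positivity
  have hE2 : Einf p ^ 2 = 4 * (((p:ℝ) - 1) / p) := by
    rw [Einf, mul_pow, Real.sq_sqrt (by positivity)]; ring
  have hv2 : (Real.sqrt 2 * u) ^ 2 = 2 * u ^ 2 := by
    rw [mul_pow, Real.sq_sqrt (by norm_num : (0:ℝ) ≤ 2)]
  have hsq : Real.sqrt ((Real.sqrt 2 * u) ^ 2 - Einf p ^ 2) = Real.sqrt 2 * s := by
    rw [hv2, hE2, show 2 * u ^ 2 - 4 * (((p:ℝ) - 1) / p) = 2 * (u ^ 2 - q) by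
      rw [hqdef]; ring, Real.sqrt_mul (by norm_num : (0:ℝ) ≤ 2), ← hsdef]
  have hlog2 : Real.log (Real.sqrt 2) = Real.log 2 / 2 := Real.log_sqrt (by norm_num)
  have hlogE : Real.log (Einf p) = Real.log 2 + (Real.log ((p:ℝ) - 1) - Real.log p) / 2 := by
    rw [Einf, Real.log_mul (by norm_num) (by positivity),
      Real.log_sqrt (by positivity), Real.log_div hpm1.ne' hp0.ne']
  have hlogB : Real.log (-(Real.sqrt 2 * u) + Real.sqrt 2 * s)
      = Real.log 2 / 2 + Real.log (-u + s) := by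
    rw [show -(Real.sqrt 2 * u) + Real.sqrt 2 * s = Real.sqrt 2 * (-u + s) by ring,
      Real.log_mul (by positivity) hB.ne', hlog2]
  have hlogA : Real.log (-u - s)
      = Real.log 2 + Real.log ((p:ℝ) - 1) - Real.log p - Real.log (-u + s) := by
    have h := congrArg Real.log hAB
    rw [Real.log_mul hA.ne' hB.ne'] at h
    have hq' : Real.log q = Real.log 2 + Real.log ((p:ℝ) - 1) - Real.log p := by
      rw [hqdef, Real.log_div (by positivity) hp0.ne',
        Real.log_mul (by norm_num) hpm1.ne']
    linarith
  have hlogz : Real.log ((p:ℝ) * z ^ 2 / 2)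
      = Real.log p + 2 * (Real.log (-u - s) - Real.log ((p:ℝ) - 1)) - Real.log 2 := by
    rw [Real.log_div (mul_ne_zero hp0.ne' (pow_ne_zero 2 hz0.ne')) (by norm_num),
      Real.log_mul hp0.ne' (pow_ne_zero 2 hz0.ne'), Real.log_pow, hz',
      Real.log_div hA.ne' hpm1.ne']
    push_cast
    ring
  have hzB : (p:ℝ) * z * (-u + s) = 2 := by
    rw [hz']
    field_simp
    linear_combination -hs2p
  have hinv : 2 / ((p:ℝ) ^ 2 * z ^ 2) = (-u + s) ^ 2 / 2 := by
    have h4 : (p:ℝ) ^ 2 * z ^ 2 * (-u + s) ^ 2 = 4 := by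
      linear_combination ((p:ℝ) * z * (-u + s) + 2) * hzB
    rw [div_eq_div_iff (mul_pos (pow_pos hp0 2) (pow_pos hz0 2)).ne' (by norm_num : (2:ℝ) ≠ 0)]
    linarith [h4]
  have h22 : Real.sqrt 2 * Real.sqrt 2 = 2 := Real.mul_self_sqrt (by norm_num)
  obtain ⟨M, hM⟩ : ∃ M : ℝ, M = ((2 - (p:ℝ)) * u ^ 2 + (p:ℝ) * u * s) / (2 * ((p:ℝ) - 1))
      + Real.log (-u + s) + (Real.log p - Real.log 2) / 2 := ⟨_, rfl⟩
  have hterm : -(Real.sqrt 2 * u / (4 * (((p:ℝ) - 1) / p))) * (Real.sqrt 2 * s)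
      = -((p:ℝ) * u * s) / (2 * ((p:ℝ) - 1)) := by
    rw [show -(Real.sqrt 2 * u / (4 * (((p:ℝ) - 1) / p))) * (Real.sqrt 2 * s)
        = -((Real.sqrt 2 * Real.sqrt 2) * (u * s)) / (4 * (((p:ℝ) - 1) / p)) by ring, h22]
    field_simp
    ring
  have hL : Theta0 p (Real.sqrt 2 * u) = M := by
    simp only [Theta0, rateI1]
    rw [hsq, hv2, hlogB, hlogE, hE2, hterm, hM]
    field_simp
    ring
  have hR : (1 / 2) * ((2 - (p : ℝ)) / p - Real.log ((p : ℝ) * z ^ 2 / 2)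
        + (((p : ℝ) - 1) / 2) * z ^ 2 - 2 / ((p : ℝ) ^ 2 * z ^ 2)) = M := by
    rw [hlogz, hlogA, hinv, hz', hM]
    field_simp
    linear_combination (2 - (p:ℝ)) * hs2p
  rw [hL, hR]
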